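/- Let γ > 0 and N be the solution operator of v'' − γv − v³ + w = 0 on (0,∞) with Neumann condition at 0 and decay at infinity. If w₁, w₂ ∈ H^1(0,∞) are distinct with w₁ ≥ w₂ pointwise, then Nw₁ > Nw₂ pointwise on [0,∞). -/

import Mathlib

/-!
With `z = v₁ - v₂` the two equations subtract to the linear equation
`z'' = (γ + v₁² + v₁v₂ + v₂²) z - (w₁ - w₂)`, whose coefficient is at least `γ`.
Weak comparison: at a positive maximum of `-z` (attained, as `z → 0` at infinity) we have
`z' = 0`, by the Neumann condition or by Fermat, while `-z'' ≥ γ(-z) > 0` near it, so `-z` still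
increases there. Strong comparison: if `z ≥ 0` vanishes at `x`, then `z'(x) = 0` as well, and on
each compact interval `z'' ≤ μ² z` for a constant `μ`. Writing `z'' - μ² z` as
`(d/dt + μ)(d/dt - μ) z` and applying Grönwall's inequality twice on each side of `x` gives
`z ≡ 0`, hence `w₁ = w₂`.
-/

open MeasureTheory Set Filter

/-- `IsSol γ w v v' v''` : `v` solves `v'' − γv − v³ + w = 0` on `[0,∞)` with Neumann
condition at `0` and decay at infinity, with `v` and `v'` in `L²(0,∞)`. -/
def IsSol (γ : ℝ) (w v v' v'' : ℝ → ℝ) : Prop :=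
  (∀ x ∈ Ici (0:ℝ), HasDerivAt v (v' x) x) ∧
  (∀ x ∈ Ici (0:ℝ), HasDerivAt v' (v'' x) x) ∧
  (∀ x ∈ Ici (0:ℝ), v'' x - γ * v x - v x ^ 3 + w x = 0) ∧
  v' 0 = 0 ∧ Tendsto v atTop (nhds 0) ∧
  MemLp v 2 (volume.restrict (Ioi (0:ℝ))) ∧
  MemLp v' 2 (volume.restrict (Ioi (0:ℝ)))

open Topology

theorem strictMonoOn_Icc_of_hasDerivAt_pos {f f' : ℝ → ℝ} {a b : ℝ}
    (hf : ∀ t ∈ Icc a b, HasDerivAt f (f' t) t) (hpos : ∀ t ∈ Ioo a b, 0 < f' t) :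
    StrictMonoOn f (Icc a b) :=
  strictMonoOn_of_hasDerivWithinAt_pos (convex_Icc a b)
    (fun t ht => (hf t ht).continuousAt.continuousWithinAt)
    (fun t ht => (hf t (interior_subset ht)).hasDerivWithinAt)
    (by simpa only [interior_Icc] using hpos)

theorem lt_of_deriv_nonneg_of_deriv2_pos {u u' u'' : ℝ → ℝ} {a b : ℝ} (hab : a < b)
    (hu : ∀ t ∈ Icc a b, HasDerivAt u (u' t) t) (hu' : ∀ t ∈ Icc a b, HasDerivAt u' (u'' t) t)
    (hpos : ∀ t ∈ Ioo a b, 0 < u'' t) (ha : 0 ≤ u' a) : u a < u b := by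
  have hu'_mono := strictMonoOn_Icc_of_hasDerivAt_pos hu' hpos
  refine strictMonoOn_Icc_of_hasDerivAt_pos hu (fun t ht => ?_)
    (left_mem_Icc.2 hab.le) (right_mem_Icc.2 hab.le) hab
  exact ha.trans_lt (hu'_mono (left_mem_Icc.2 hab.le) (Ioo_subset_Icc_self ht) ht.1)

theorem IsExtrOn.hasDerivAt_eq_zero_of_Ici {u u' : ℝ → ℝ} {a m : ℝ}
    (hext : IsExtrOn u (Ici a) m) (hm : m ∈ Ici a) (hu : HasDerivAt u (u' m) m)
    (ha : u' a = 0) : u' m = 0 := by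
  rcases (mem_Ici.1 hm).eq_or_lt with rfl | ham
  · exact ha
  · exact (hext.isLocalExtr (Ici_mem_nhds ham)).hasDerivAt_eq_zero hu

theorem nonpos_of_pos_imp_deriv2_pos {u u' u'' : ℝ → ℝ} {a : ℝ}
    (hu : ∀ t ∈ Ici a, HasDerivAt u (u' t) t) (hu' : ∀ t ∈ Ici a, HasDerivAt u' (u'' t) t)
    (hpos : ∀ t ∈ Ici a, 0 < u t → 0 < u'' t) (ha : u' a = 0)
    (htop : Tendsto u atTop (𝓝 0)) : ∀ t ∈ Ici a, u t ≤ 0 := by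
  by_contra! ⟨x₀, hx₀, hux₀⟩
  obtain ⟨m, hm, hmax⟩ : ∃ m ∈ Ici a, IsMaxOn u (Ici a) m := by
    refine ContinuousOn.exists_isMaxOn' (fun t ht => (hu t ht).continuousAt.continuousWithinAt)
      isClosed_Ici hx₀ ?_
    rw [cocompact_eq_atBot_atTop, inf_sup_right, (disjoint_atBot_principal_Ici a).eq_bot,
      bot_sup_eq]
    exact (htop.eventually (ge_mem_nhds hux₀)).filter_mono inf_le_left
  have hum : 0 < u m := hux₀.trans_le (hmax hx₀)
  have hu'm : u' m = 0 := hmax.isExtr.hasDerivAt_eq_zero_of_Ici hm (hu m hm) ha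
  obtain ⟨b, hmb, hb⟩ : ∃ b ∈ Ioi m, Icc m b ⊆ {t | 0 < u t} :=
    mem_nhdsGE_iff_exists_Icc_subset.1
      (nhdsWithin_le_nhds ((hu m hm).continuousAt.eventually (lt_mem_nhds hum)))
  have hIcc : Icc m b ⊆ Ici a := fun t ht => le_trans hm ht.1
  refine (lt_of_deriv_nonneg_of_deriv2_pos hmb (fun t ht => hu t (hIcc ht))
    (fun t ht => hu' t (hIcc ht)) (fun t ht => ?_) hu'm.ge).not_ge
    (hmax (hIcc (right_mem_Icc.2 hmb.le)))
  exact hpos t (hIcc (Ioo_subset_Icc_self ht)) (hb (Ioo_subset_Icc_self ht))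

theorem nonpos_of_deriv_le_mul {f f' : ℝ → ℝ} {K a b : ℝ}
    (hf : ∀ t ∈ Icc a b, HasDerivAt f (f' t) t) (hle : ∀ t ∈ Icc a b, f' t ≤ K * f t)
    (ha : f a ≤ 0) : ∀ t ∈ Icc a b, f t ≤ 0 := by
  intro t ht
  simpa only [gronwallBound_ε0_δ0] using le_gronwallBound_of_liminf_deriv_right_le (ε := 0)
    (fun s hs => (hf s hs).continuousAt.continuousWithinAt)
    (fun s hs _ hr => (hf s (Ico_subset_Icc_self hs)).hasDerivWithinAt.liminf_right_slope_le hr)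
    ha (fun s hs => by simpa only [add_zero] using hle s (Ico_subset_Icc_self hs)) t ht

-- `u'' - μ² u = (d/dt + μ)(d/dt - μ) u`: apply Grönwall to `u' - μ u`, then to `u`.
theorem nonpos_of_deriv2_le_sq_mul {u u' u'' : ℝ → ℝ} {a b μ : ℝ}
    (hu : ∀ t ∈ Icc a b, HasDerivAt u (u' t) t) (hu' : ∀ t ∈ Icc a b, HasDerivAt u' (u'' t) t)
    (hle : ∀ t ∈ Icc a b, u'' t ≤ μ ^ 2 * u t) (ha : u a = 0) (ha' : u' a = 0) :
    ∀ t ∈ Icc a b, u t ≤ 0 := by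
  have hψ : ∀ t ∈ Icc a b, u' t - μ * u t ≤ 0 :=
    nonpos_of_deriv_le_mul (K := -μ) (fun t ht => (hu' t ht).sub ((hu t ht).const_mul μ))
      (fun t ht => by linarith [hle t ht]) (by simp [ha, ha'])
  exact nonpos_of_deriv_le_mul (K := μ) hu (fun t ht => by linarith [hψ t ht]) ha.le

theorem nonpos_of_deriv2_le_sq_mul_of_right {u u' u'' : ℝ → ℝ} {a b μ : ℝ}
    (hu : ∀ t ∈ Icc a b, HasDerivAt u (u' t) t) (hu' : ∀ t ∈ Icc a b, HasDerivAt u' (u'' t) t)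
    (hle : ∀ t ∈ Icc a b, u'' t ≤ μ ^ 2 * u t) (hb : u b = 0) (hb' : u' b = 0) :
    ∀ t ∈ Icc a b, u t ≤ 0 := by
  have hrefl : ∀ {s}, s ∈ Icc a b → a + b - s ∈ Icc a b := fun hs =>
    ⟨by linarith [hs.2], by linarith [hs.1]⟩
  intro t ht
  simpa using nonpos_of_deriv2_le_sq_mul (u := fun s => u (a + b - s))
    (u' := fun s => -u' (a + b - s)) (u'' := fun s => u'' (a + b - s)) (μ := μ)
    (fun s hs => (hu _ (hrefl hs)).comp_const_sub (a + b) s)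
    (fun s hs => by simpa using ((hu' _ (hrefl hs)).comp_const_sub (a + b) s).fun_neg)
    (fun s hs => hle _ (hrefl hs)) (by simpa using hb) (by simpa using hb') _ (hrefl ht)

theorem eqOn_zero_of_nonneg_of_deriv2_le_mul {u u' u'' c : ℝ → ℝ} {a b x : ℝ}
    (hu : ∀ t ∈ Icc a b, HasDerivAt u (u' t) t) (hu' : ∀ t ∈ Icc a b, HasDerivAt u' (u'' t) t)
    (hc : ContinuousOn c (Icc a b)) (hnonneg : ∀ t ∈ Icc a b, 0 ≤ u t)
    (hle : ∀ t ∈ Icc a b, u'' t ≤ c t * u t) (hx : x ∈ Icc a b) (hux : u x = 0)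
    (hu'x : u' x = 0) : ∀ t ∈ Icc a b, u t = 0 := by
  obtain ⟨M, hM⟩ := isCompact_Icc.bddAbove_image hc
  have hle' : ∀ t ∈ Icc a b, u'' t ≤ √(max M 0) ^ 2 * u t := fun t ht => by
    rw [Real.sq_sqrt (le_max_right M 0)]
    exact (hle t ht).trans (mul_le_mul_of_nonneg_right
      ((hM (mem_image_of_mem c ht)).trans (le_max_left M 0)) (hnonneg t ht))
  have hleft : Icc a x ⊆ Icc a b := Icc_subset_Icc_right hx.2
  have hright : Icc x b ⊆ Icc a b := Icc_subset_Icc_left hx.1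
  intro t ht
  refine le_antisymm ?_ (hnonneg t ht)
  rcases le_total t x with htx | hxt
  · exact nonpos_of_deriv2_le_sq_mul_of_right (fun s hs => hu s (hleft hs))
      (fun s hs => hu' s (hleft hs)) (fun s hs => hle' s (hleft hs)) hux hu'x t ⟨ht.1, htx⟩
  · exact nonpos_of_deriv2_le_sq_mul (fun s hs => hu s (hright hs))
      (fun s hs => hu' s (hright hs)) (fun s hs => hle' s (hright hs)) hux hu'x t ⟨hxt, ht.2⟩

theorem HasDerivAt.eq_zero_of_eventuallyEq_zero {f : ℝ → ℝ} {f' x : ℝ} (hf : HasDerivAt f f' x)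
    (h : f =ᶠ[𝓝 x] 0) : f' = 0 :=
  (hf.congr_of_eventuallyEq h.symm).unique (hasDerivAt_const x 0)

namespace IsSol

variable {γ : ℝ} {w₁ w₂ v₁ v₁' v₁'' v₂ v₂' v₂'' : ℝ → ℝ}

theorem sub_deriv2_eq (h₁ : IsSol γ w₁ v₁ v₁' v₁'') (h₂ : IsSol γ w₂ v₂ v₂' v₂'') {t : ℝ}
    (ht : t ∈ Ici 0) : v₁'' t - v₂'' t =
      (γ + (v₁ t ^ 2 + v₁ t * v₂ t + v₂ t ^ 2)) * (v₁ t - v₂ t) - (w₁ t - w₂ t) := by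
  linear_combination h₁.2.2.1 t ht - h₂.2.2.1 t ht

theorem le_of_forcing_le (hγ : 0 < γ) (h₁ : IsSol γ w₁ v₁ v₁' v₁'')
    (h₂ : IsSol γ w₂ v₂ v₂' v₂'') (hw : ∀ t ∈ Ici 0, w₂ t ≤ w₁ t) :
    ∀ t ∈ Ici 0, v₂ t ≤ v₁ t := by
  have hlin := fun t (ht : t ∈ Ici (0:ℝ)) => sub_deriv2_eq h₂ h₁ ht
  obtain ⟨hv₁, hv₁', -, hN₁, htop₁, -⟩ := h₁
  obtain ⟨hv₂, hv₂', -, hN₂, htop₂, -⟩ := h₂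
  refine fun t ht => sub_nonpos.1 (nonpos_of_pos_imp_deriv2_pos (u := fun s => v₂ s - v₁ s)
    (fun s hs => (hv₂ s hs).sub (hv₁ s hs)) (fun s hs => (hv₂' s hs).sub (hv₁' s hs))
    (fun s hs hz => ?_) (by simp [hN₁, hN₂]) (by simpa using htop₂.sub htop₁) t ht)
  have hq : 0 ≤ v₂ s ^ 2 + v₂ s * v₁ s + v₁ s ^ 2 := by
    nlinarith [sq_nonneg (v₂ s + v₁ s), sq_nonneg (v₂ s), sq_nonneg (v₁ s)]
  rw [hlin s hs]
  nlinarith [mul_pos hγ hz, mul_nonneg hq hz.le, hw s hs]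

theorem eqOn_of_forcing_le_of_eq (h₁ : IsSol γ w₁ v₁ v₁' v₁'') (h₂ : IsSol γ w₂ v₂ v₂' v₂'')
    (hw : ∀ t ∈ Ici 0, w₂ t ≤ w₁ t) (hv : ∀ t ∈ Ici 0, v₂ t ≤ v₁ t) {x : ℝ} (hx : x ∈ Ici 0)
    (hx_eq : v₂ x = v₁ x) : ∀ t ∈ Ici 0, v₁ t = v₂ t := by
  have hlin := fun t (ht : t ∈ Ici (0:ℝ)) => sub_deriv2_eq h₁ h₂ ht
  obtain ⟨hv₁, hv₁', -, hN₁, -⟩ := h₁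
  obtain ⟨hv₂, hv₂', -, hN₂, -⟩ := h₂
  have hz : ∀ t ∈ Ici 0, HasDerivAt (fun s => v₁ s - v₂ s) (v₁' t - v₂' t) t :=
    fun t ht => (hv₁ t ht).sub (hv₂ t ht)
  have hz' : v₁' x - v₂' x = 0 := by
    refine IsExtrOn.hasDerivAt_eq_zero_of_Ici (u' := fun s => v₁' s - v₂' s) (a := 0)
      (IsMinOn.isExtr fun t ht => ?_) hx (hz x hx) (by simp [hN₁, hN₂])
    simpa [hx_eq] using hv t ht
  intro t ht
  have hsub : Icc 0 (max x t) ⊆ Ici 0 := Icc_subset_Ici_self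
  refine sub_eq_zero.1 (eqOn_zero_of_nonneg_of_deriv2_le_mul (u := fun s => v₁ s - v₂ s)
    (c := fun s => γ + (v₁ s ^ 2 + v₁ s * v₂ s + v₂ s ^ 2)) (fun s hs => hz s (hsub hs))
    (fun s hs => (hv₁' s (hsub hs)).sub (hv₂' s (hsub hs))) ?_
    (fun s hs => sub_nonneg.2 (hv s (hsub hs))) (fun s hs => ?_)
    ⟨hx, le_max_left x t⟩ (by simp [hx_eq]) hz' t ⟨ht, le_max_right x t⟩)
  · have hc₁ : ContinuousOn v₁ (Icc 0 (max x t)) :=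
      fun s hs => (hv₁ s (hsub hs)).continuousAt.continuousWithinAt
    have hc₂ : ContinuousOn v₂ (Icc 0 (max x t)) :=
      fun s hs => (hv₂ s (hsub hs)).continuousAt.continuousWithinAt
    fun_prop
  · linarith [hlin s (hsub hs), hw s (hsub hs)]

theorem forcing_eqOn_of_eqOn (h₁ : IsSol γ w₁ v₁ v₁' v₁'') (h₂ : IsSol γ w₂ v₂ v₂' v₂'')
    (hv : ∀ t ∈ Ici 0, v₁ t = v₂ t) : ∀ t ∈ Ioi 0, w₁ t = w₂ t := by
  have hlin := fun t (ht : t ∈ Ici (0:ℝ)) => sub_deriv2_eq h₁ h₂ ht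
  obtain ⟨hv₁, hv₁', -⟩ := h₁
  obtain ⟨hv₂, hv₂', -⟩ := h₂
  have hI : Ioi (0:ℝ) ⊆ Ici 0 := Ioi_subset_Ici_self
  have hv' : ∀ s ∈ Ioi (0:ℝ), v₁' s - v₂' s = 0 := fun s hs =>
    ((hv₁ s (hI hs)).sub (hv₂ s (hI hs))).eq_zero_of_eventuallyEq_zero
      (eventually_of_mem (Ioi_mem_nhds hs) fun r hr => sub_eq_zero.2 (hv r (hI hr)))
  intro t ht
  have hv'' : v₁'' t - v₂'' t = 0 :=
    ((hv₁' t (hI ht)).sub (hv₂' t (hI ht))).eq_zero_of_eventuallyEq_zero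
      (eventually_of_mem (Ioi_mem_nhds ht) hv')
  have := hlin t (hI ht)
  rw [hv t (hI ht), sub_self, mul_zero, hv''] at this
  linarith

end IsSol

theorem statement6_general
    (γ : ℝ) (hγ : 0 < γ) (w₁ w₂ v₁ v₁' v₁'' v₂ v₂' v₂'' : ℝ → ℝ)
    (hsol₁ : IsSol γ w₁ v₁ v₁' v₁'')
    (hsol₂ : IsSol γ w₂ v₂ v₂' v₂'')
    (hge : ∀ x ∈ Ici (0:ℝ), w₂ x ≤ w₁ x)
    (hdistinct : ¬ (w₁ =ᵐ[volume.restrict (Ioi (0:ℝ))] w₂)) :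
    ∀ x ∈ Ici (0:ℝ), v₂ x < v₁ x := by
  have hle := hsol₁.le_of_forcing_le hγ hsol₂ hge
  intro x hx
  refine (hle x hx).lt_of_ne fun hx_eq => hdistinct ?_
  have hv := hsol₁.eqOn_of_forcing_le_of_eq hsol₂ hge hle hx hx_eq
  exact (ae_restrict_iff' measurableSet_Ioi).2
    (ae_of_all _ (hsol₁.forcing_eqOn_of_eqOn hsol₂ hv))

/-- If `w₁ ≥ w₂` are distinct elements of `H¹(0,∞)`, then
`Nw₁ > Nw₂` pointwise on `[0,∞)`. -/
theorem statement6
    (γ : ℝ) (hγ : 0 < γ) (w₁ w₂ v₁ v₁' v₁'' v₂ v₂' v₂'' : ℝ → ℝ)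
    (hw₁ : MemLp w₁ 2 (volume.restrict (Ioi (0:ℝ))))
    (hw₂ : MemLp w₂ 2 (volume.restrict (Ioi (0:ℝ))))
    (hsol₁ : IsSol γ w₁ v₁ v₁' v₁'')
    (hsol₂ : IsSol γ w₂ v₂ v₂' v₂'')
    (hge : ∀ x ∈ Ici (0:ℝ), w₂ x ≤ w₁ x)
    (hdistinct : ¬ (w₁ =ᵐ[volume.restrict (Ioi (0:ℝ))] w₂)) :
    ∀ x ∈ Ici (0:ℝ), v₂ x < v₁ x :=
  statement6_general γ hγ w₁ w₂ v₁ v₁' v₁'' v₂ v₂' v₂'' hsol₁ hsol₂ hge hdistinct
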